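/- arXiv:2404.19449 — 5 statements merged into one kernel-verified Lean document; each statement's English description precedes it below -/
import Mathlib

section
/- Let a_max ≥ 0, let (a_i)_{i≥1} be a sequence of nonnegative real numbers, and let (X_i)_{i≥0} satisfy X_0 = 0 and X_{i+1} = max(X_i − a_max, 0) + a_{i+1} for all i ≥ 0. If lim_{n→∞} X_n / n = 0 (the queue is rate stable), then limsup_{n→∞} (1/n) · Σ_{i=1}^{n} a_i ≤ a_max. -/
/-!
Since `max (X i - amax) 0 ≥ X i - amax`, each step of the queue satisfies
`X (i + 1) ≥ X i - amax + a (i + 1)`; telescoping gives `∑_{i ≤ n} a i ≤ X n + n * amax`.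
Dividing by `n`, the average arrival is eventually at most `X n / n + amax`, which tends to `amax`.
Nonnegativity of the arrivals bounds the averages below, so their `limsup` is not the junk value.
-/

open Filter Finset Topology

theorem sum_Icc_le_sub_add_mul_of_add_sub_le_succ {X a : ℕ → ℝ} {c : ℝ}
    (h : ∀ i, X i + a (i + 1) - c ≤ X (i + 1)) (n : ℕ) :
    ∑ i ∈ Icc 1 n, a i ≤ X n - X 0 + n * c := by
  induction n with
  | zero => simp
  | succ n ih =>
    rw [sum_Icc_succ_top (by omega)]
    push_cast
    linarith [h n]

theorem rate_stable_queue_average_arrival_general (amax : ℝ)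
    (a : ℕ → ℝ) (ha : ∀ i, 1 ≤ i → 0 ≤ a i)
    (X : ℕ → ℝ) (hX0 : X 0 = 0)
    (hXrec : ∀ i, X (i + 1) = max (X i - amax) 0 + a (i + 1))
    (hstable : Filter.Tendsto (fun n : ℕ => X n / (n : ℝ)) Filter.atTop (nhds 0)) :
    Filter.limsup (fun n : ℕ => (1 / (n : ℝ)) * ∑ i ∈ Finset.Icc 1 n, a i)
      Filter.atTop ≤ amax := by
  have hsum (n : ℕ) : ∑ i ∈ Icc 1 n, a i ≤ X n + n * amax := by
    have hstep (i : ℕ) : X i + a (i + 1) - amax ≤ X (i + 1) := by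
      rw [hXrec]
      linarith [le_max_left (X i - amax) 0]
    simpa [hX0] using sum_Icc_le_sub_add_mul_of_add_sub_le_succ hstep n
  have haverage : ∀ᶠ n : ℕ in atTop,
      (1 / (n : ℝ)) * ∑ i ∈ Icc 1 n, a i ≤ X n / n + amax := by
    filter_upwards [eventually_gt_atTop 0] with n hn
    have hn : (0 : ℝ) < n := Nat.cast_pos.mpr hn
    rw [one_div, inv_mul_le_iff₀ hn, mul_add, mul_div_cancel₀ _ hn.ne']
    exact hsum n
  have hlimit : Tendsto (fun n : ℕ => X n / n + amax) atTop (𝓝 amax) := by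
    simpa using hstable.add_const amax
  have hnonneg (n : ℕ) : 0 ≤ (1 / (n : ℝ)) * ∑ i ∈ Icc 1 n, a i :=
    mul_nonneg (by positivity) (sum_nonneg fun i hi => ha i (mem_Icc.mp hi).1)
  calc limsup (fun n : ℕ => (1 / (n : ℝ)) * ∑ i ∈ Icc 1 n, a i) atTop
      ≤ limsup (fun n : ℕ => X n / n + amax) atTop :=
        limsup_le_limsup haverage (isCoboundedUnder_le_of_le atTop hnonneg)
          hlimit.isBoundedUnder_le
    _ = amax := hlimit.limsup_eq

/-- Rate stability of the virtual queue implies the long-run time-averaged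
arrival rate is at most a_max (deterministic Proposition 1). -/
theorem rate_stable_queue_average_arrival (amax : ℝ) (hamax : 0 ≤ amax)
    (a : ℕ → ℝ) (ha : ∀ i, 1 ≤ i → 0 ≤ a i)
    (X : ℕ → ℝ) (hX0 : X 0 = 0)
    (hXrec : ∀ i, X (i + 1) = max (X i - amax) 0 + a (i + 1))
    (hstable : Filter.Tendsto (fun n : ℕ => X n / (n : ℝ)) Filter.atTop (nhds 0)) :
    Filter.limsup (fun n : ℕ => (1 / (n : ℝ)) * ∑ i ∈ Finset.Icc 1 n, a i)
      Filter.atTop ≤ amax :=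
  rate_stable_queue_average_arrival_general amax a ha X hX0 hXrec hstable
end

section
/- Let (Ω, μ) be a probability space, let a_max ≥ 0, let (a_i)_{i≥1} be a sequence of nonnegative integrable random variables on Ω, and let (X_i)_{i≥0} be random variables with X_0 = 0 almost everywhere and X_{i+1} = max(X_i − a_max, 0) + a_{i+1} almost everywhere for all i ≥ 0. If lim_{n→∞} (1/n) · E[|X_n|] = 0 (the queue is mean rate stable), then limsup_{n→∞} (1/n) · Σ_{i=1}^{n} E[a_i] ≤ a_max. -/
/-!
Unrolling the recursion `X (i+1) = max (X i - amax) 0 + a (i+1) ≥ X i - amax + a (i+1)` from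
`X 0 = 0` gives `∑_{i=1}^n a i - n * amax ≤ X n` pathwise. Taking expectations and dividing by `n`,
the average expected arrival is at most `amax + E|X n| / n`, whose second term vanishes by mean rate
stability.
-/

open MeasureTheory Filter Topology Finset

lemma sum_Icc_sub_mul_le_of_le_succ {x b : ℕ → ℝ} {c : ℝ} (h0 : 0 ≤ x 0)
    (hstep : ∀ i, x i - c + b (i + 1) ≤ x (i + 1)) (n : ℕ) :
    ∑ i ∈ Icc 1 n, b i - n * c ≤ x n := by
  induction n with
  | zero => simpa using h0
  | succ n ih =>
    rw [sum_Icc_succ_top (by omega)]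
    push_cast
    linarith [hstep n]

section Lindley

variable {Ω : Type*} [MeasurableSpace Ω] {μ : Measure Ω} {c : ℝ} {a X : ℕ → Ω → ℝ}

lemma integrable_of_lindley [IsFiniteMeasure μ] (ha : ∀ i, Integrable (a i) μ)
    (h0 : Integrable (X 0) μ)
    (hrec : ∀ i, ∀ᵐ ω ∂μ, X (i + 1) ω = max (X i ω - c) 0 + a (i + 1) ω) (n : ℕ) :
    Integrable (X n) μ := by
  induction n with
  | zero => exact h0
  | succ n ih =>
    exact (((ih.sub (integrable_const c)).pos_part).add (ha (n + 1))).congr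
      ((hrec n).mono fun _ h => h.symm)

lemma sum_Icc_sub_mul_le_of_lindley (hX0 : ∀ᵐ ω ∂μ, X 0 ω = 0)
    (hrec : ∀ i, ∀ᵐ ω ∂μ, X (i + 1) ω = max (X i ω - c) 0 + a (i + 1) ω) (n : ℕ) :
    ∀ᵐ ω ∂μ, ∑ i ∈ Icc 1 n, a i ω - n * c ≤ X n ω := by
  filter_upwards [hX0, ae_all_iff.2 hrec] with ω h0 hstep
  refine sum_Icc_sub_mul_le_of_le_succ (x := fun k => X k ω) h0.ge (fun i => ?_) n
  rw [hstep i]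
  linarith [le_max_left (X i ω - c) 0]

lemma sum_integral_sub_mul_le_integral_abs_of_lindley [IsProbabilityMeasure μ]
    (ha : ∀ i, Integrable (a i) μ) (hX0 : ∀ᵐ ω ∂μ, X 0 ω = 0)
    (hrec : ∀ i, ∀ᵐ ω ∂μ, X (i + 1) ω = max (X i ω - c) 0 + a (i + 1) ω) (n : ℕ) :
    ∑ i ∈ Icc 1 n, ∫ ω, a i ω ∂μ - n * c ≤ ∫ ω, |X n ω| ∂μ := by
  have hsum : Integrable (fun ω => ∑ i ∈ Icc 1 n, a i ω) μ :=
    integrable_finsetSum _ fun i _ => ha i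
  have hX : Integrable (X n) μ :=
    integrable_of_lindley ha ((integrable_zero Ω ℝ μ).congr (hX0.mono fun _ h => h.symm)) hrec n
  calc ∑ i ∈ Icc 1 n, ∫ ω, a i ω ∂μ - n * c
      = ∫ ω, (∑ i ∈ Icc 1 n, a i ω - n * c) ∂μ := by
        rw [integral_sub hsum (integrable_const _), integral_finsetSum _ fun i _ => ha i,
          integral_const, probReal_univ, one_smul]
    _ ≤ ∫ ω, |X n ω| ∂μ := by
        refine integral_mono_ae (hsum.sub (integrable_const _)) hX.abs ?_
        filter_upwards [sum_Icc_sub_mul_le_of_lindley hX0 hrec n] with ω h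
        exact h.trans (le_abs_self _)

end Lindley

lemma limsup_le_of_eventually_le_add_of_tendsto_zero {ι : Type*} {l : Filter ι} [l.NeBot]
    {f g : ι → ℝ} {c : ℝ} (hf : IsBoundedUnder (· ≥ ·) l f) (hfg : ∀ᶠ i in l, f i ≤ c + g i)
    (hg : Tendsto g l (𝓝 0)) : limsup f l ≤ c := by
  have hcg : Tendsto (fun i => c + g i) l (𝓝 c) := by simpa using hg.const_add c
  calc limsup f l ≤ limsup (fun i => c + g i) l :=
        limsup_le_limsup hfg hf.isCoboundedUnder_le hcg.isBoundedUnder_le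
    _ = c := hcg.limsup_eq

theorem mean_rate_stable_queue_average_arrival_general
    {Ω : Type*} [MeasurableSpace Ω] (μ : Measure Ω) [IsProbabilityMeasure μ]
    (amax : ℝ)
    (a : ℕ → Ω → ℝ) (ha_nonneg : ∀ i ω, 0 ≤ a i ω)
    (ha_int : ∀ i, Integrable (a i) μ)
    (X : ℕ → Ω → ℝ)
    (hX0 : ∀ᵐ ω ∂μ, X 0 ω = 0)
    (hXrec : ∀ i, ∀ᵐ ω ∂μ, X (i + 1) ω = max (X i ω - amax) 0 + a (i + 1) ω)
    (hstable : Filter.Tendsto (fun n : ℕ => (1 / (n : ℝ)) * ∫ ω, |X n ω| ∂μ)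
      Filter.atTop (nhds 0)) :
    Filter.limsup
      (fun n : ℕ => (1 / (n : ℝ)) * ∑ i ∈ Finset.Icc 1 n, ∫ ω, a i ω ∂μ)
      Filter.atTop ≤ amax := by
  have hnonneg (n : ℕ) : 0 ≤ (1 / (n : ℝ)) * ∑ i ∈ Icc 1 n, ∫ ω, a i ω ∂μ :=
    mul_nonneg (by positivity) (sum_nonneg fun i _ => integral_nonneg (ha_nonneg i))
  refine limsup_le_of_eventually_le_add_of_tendsto_zero ⟨0, eventually_map.2 (.of_forall hnonneg)⟩
    ?_ hstable
  filter_upwards [eventually_ge_atTop 1] with n hn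
  have hn : (0 : ℝ) < n := by exact_mod_cast hn
  have hbound := sum_integral_sub_mul_le_integral_abs_of_lindley ha_int hX0 hXrec n
  rw [one_div, inv_mul_le_iff₀ hn, mul_add, mul_inv_cancel_left₀ hn.ne']
  linarith

/-- Proposition 1: mean rate stability of the virtual AoI queue implies the
long-term time-averaged expected arrival is bounded by a_max. -/
theorem mean_rate_stable_queue_average_arrival
    {Ω : Type*} [MeasurableSpace Ω] (μ : Measure Ω) [IsProbabilityMeasure μ]
    (amax : ℝ) (hamax : 0 ≤ amax)
    (a : ℕ → Ω → ℝ) (ha_nonneg : ∀ i ω, 0 ≤ a i ω)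
    (ha_int : ∀ i, Integrable (a i) μ)
    (X : ℕ → Ω → ℝ) (hX_meas : ∀ i, Measurable (X i))
    (hX0 : ∀ᵐ ω ∂μ, X 0 ω = 0)
    (hXrec : ∀ i, ∀ᵐ ω ∂μ, X (i + 1) ω = max (X i ω - amax) 0 + a (i + 1) ω)
    (hstable : Filter.Tendsto (fun n : ℕ => (1 / (n : ℝ)) * ∫ ω, |X n ω| ∂μ)
      Filter.atTop (nhds 0)) :
    Filter.limsup
      (fun n : ℕ => (1 / (n : ℝ)) * ∑ i ∈ Finset.Icc 1 n, ∫ ω, a i ω ∂μ)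
      Filter.atTop ≤ amax :=
  mean_rate_stable_queue_average_arrival_general μ amax a ha_nonneg ha_int X hX0 hXrec hstable
end

section
/- Let M be a finite index set, β_m ∈ {0,1} with Σ_{m∈M} β_m ≤ 1, P_m ∈ [0,1], and let a ≥ 0, X ≥ 0, V ≥ 0, a_max ≥ 0 be real numbers. Set a' = (1 − Σ_{m∈M} β_m·P_m)·(a + 1) and X' = max(X − a_max, 0) + a'. Then (1/2)·(X'² − X²) + V·a' ≤ B − Σ_{m∈M} β_m·P_m·(V + X)·(a + 1), where B = (1/2)·(a² + 2(X + V + 1)·a + a_max² + 2X + 2V + 1) − X·a_max. -/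
/-!
With `s = ∑ β m * P m ∈ [0, 1]` we have `0 ≤ a' ≤ a + 1`. Expanding `X'²` and using
`max (X - a_max) 0 ² ≤ (X - a_max)²` and `max (X - a_max) 0 ≤ X` gives
`½ (X'² - X²) ≤ ½ (a_max² + (a + 1)²) - X a_max + X a'`; adding `V a'` and writing
`a' = (a + 1) - s (a + 1)` yields exactly `B - s (V + X) (a + 1)`.
-/

open Finset

lemma sum_mul_mem_Icc_of_sum_le_one {ι : Type*} (s : Finset ι) (β P : ι → ℝ)
    (hβ : ∀ m ∈ s, 0 ≤ β m) (hβsum : ∑ m ∈ s, β m ≤ 1) (hP : ∀ m ∈ s, P m ∈ Set.Icc 0 1) :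
    ∑ m ∈ s, β m * P m ∈ Set.Icc 0 1 :=
  ⟨sum_nonneg fun m hm => mul_nonneg (hβ m hm) (hP m hm).1,
    (sum_le_sum fun m hm => mul_le_of_le_one_right (hβ m hm) (hP m hm).2).trans hβsum⟩

lemma sq_max_sub_zero_le (x c : ℝ) : max (x - c) 0 ^ 2 ≤ (x - c) ^ 2 :=
  calc max (x - c) 0 ^ 2 ≤ |x - c| ^ 2 :=
        pow_le_pow_left₀ (le_max_right _ _) (max_le (le_abs_self _) (abs_nonneg _)) 2
    _ = (x - c) ^ 2 := sq_abs _

lemma half_sq_queue_update_sub_half_sq_le {X c y : ℝ} (hX : 0 ≤ X) (hc : 0 ≤ c) (hy : 0 ≤ y) :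
    (1 / 2) * ((max (X - c) 0 + y) ^ 2 - X ^ 2) ≤ (1 / 2) * (c ^ 2 + y ^ 2) - X * c + X * y := by
  have hle : max (X - c) 0 ≤ X := max_le (by linarith) hX
  nlinarith [sq_max_sub_zero_le X c, mul_le_mul_of_nonneg_right hle hy]

theorem drift_plus_penalty_bound_general {M : Type*} [Fintype M]
    (β : M → ℝ) (hβ : ∀ m, β m = 0 ∨ β m = 1) (hβsum : ∑ m, β m ≤ 1)
    (P : M → ℝ) (hP : ∀ m, 0 ≤ P m ∧ P m ≤ 1)
    (a X V amax : ℝ) (ha : 0 ≤ a) (hX : 0 ≤ X) (hamax : 0 ≤ amax)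
    (a' X' B : ℝ)
    (ha' : a' = (1 - ∑ m, β m * P m) * (a + 1))
    (hX' : X' = max (X - amax) 0 + a')
    (hB : B = (1 / 2) * (a ^ 2 + 2 * (X + V + 1) * a + amax ^ 2 + 2 * X + 2 * V + 1)
      - X * amax) :
    (1 / 2) * (X' ^ 2 - X ^ 2) + V * a'
      ≤ B - ∑ m, β m * P m * (V + X) * (a + 1) := by
  set s := ∑ m, β m * P m
  obtain ⟨hs0, hs1⟩ : s ∈ Set.Icc 0 1 :=
    sum_mul_mem_Icc_of_sum_le_one _ β P (fun m _ => (hβ m).elim (·.ge) (· ▸ zero_le_one))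
      hβsum (fun m _ => hP m)
  have ha'0 : 0 ≤ a' := ha' ▸ mul_nonneg (by linarith) (by linarith)
  have ha'le : a' ≤ a + 1 := ha' ▸ mul_le_of_le_one_left (by linarith) (by linarith)
  have hsum : ∑ m, β m * P m * (V + X) * (a + 1) = s * (V + X) * (a + 1) := by
    simp only [s, sum_mul]
  calc (1 / 2) * (X' ^ 2 - X ^ 2) + V * a'
      ≤ (1 / 2) * (amax ^ 2 + a' ^ 2) - X * amax + (X + V) * a' := by
        linarith [hX' ▸ half_sq_queue_update_sub_half_sq_le hX hamax ha'0]
    _ ≤ (1 / 2) * (amax ^ 2 + (a + 1) ^ 2) - X * amax + (X + V) * a' := by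
        gcongr
    _ = B - ∑ m, β m * P m * (V + X) * (a + 1) := by
        rw [hsum, hB, ha']; ring

/-- Per-queue deterministic drift-plus-penalty upper bound (Proposition 2). -/
theorem drift_plus_penalty_bound {M : Type*} [Fintype M]
    (β : M → ℝ) (hβ : ∀ m, β m = 0 ∨ β m = 1) (hβsum : ∑ m, β m ≤ 1)
    (P : M → ℝ) (hP : ∀ m, 0 ≤ P m ∧ P m ≤ 1)
    (a X V amax : ℝ) (ha : 0 ≤ a) (hX : 0 ≤ X) (hV : 0 ≤ V) (hamax : 0 ≤ amax)
    (a' X' B : ℝ)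
    (ha' : a' = (1 - ∑ m, β m * P m) * (a + 1))
    (hX' : X' = max (X - amax) 0 + a')
    (hB : B = (1 / 2) * (a ^ 2 + 2 * (X + V + 1) * a + amax ^ 2 + 2 * X + 2 * V + 1)
      - X * amax) :
    (1 / 2) * (X' ^ 2 - X ^ 2) + V * a'
      ≤ B - ∑ m, β m * P m * (V + X) * (a + 1) :=
  drift_plus_penalty_bound_general β hβ hβsum P hP a X V amax ha hX hamax a' X' B ha' hX' hB
end

section
/- For all real constants A > 0 and B > 0, the function f(x, y) = log((A/(x·y)) + B) is strictly convex on the open positive quadrant {(x, y) ∈ ℝ² : x > 0, y > 0}. -/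
/-!
Since `A / (x * y) = A * exp (-(log x + log y))`, the function is `g ∘ (log x + log y)` with
`g s = log (A * exp (-s) + B)`. The inner map is strictly concave on the quadrant, and `g` is
convex (its derivative `B / (A * exp (-s) + B) - 1` is monotone) and strictly decreasing, so the
composition is strictly convex.
-/

open Set Real

theorem StrictConcaveOn.fst_add_snd {𝕜 E F β : Type*} [Semiring 𝕜] [PartialOrder 𝕜]
    [AddCommMonoid E] [AddCommMonoid F] [AddCommMonoid β] [PartialOrder β]
    [IsOrderedCancelAddMonoid β] [Module 𝕜 E] [Module 𝕜 F] [Module 𝕜 β]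
    {s : Set E} {t : Set F} {f : E → β} {g : F → β}
    (hf : StrictConcaveOn 𝕜 s f) (hg : StrictConcaveOn 𝕜 t g) :
    StrictConcaveOn 𝕜 (s ×ˢ t) fun p => f p.1 + g p.2 := by
  refine ⟨hf.1.prod hg.1, fun p hp q hq hpq a b ha hb hab => ?_⟩
  have hf_le := hf.concaveOn.2 hp.1 hq.1 ha.le hb.le hab
  have hg_le := hg.concaveOn.2 hp.2 hq.2 ha.le hb.le hab
  simp only [Prod.smul_fst, Prod.smul_snd, Prod.fst_add, Prod.snd_add, smul_add]
  rw [add_add_add_comm]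
  by_cases h₁ : p.1 = q.1
  · have h₂ : p.2 ≠ q.2 := fun h₂ => hpq (Prod.ext h₁ h₂)
    exact add_lt_add_of_le_of_lt hf_le (hg.2 hp.2 hq.2 h₂ ha hb hab)
  · exact add_lt_add_of_lt_of_le (hf.2 hp.1 hq.1 h₁ ha hb hab) hg_le

theorem strictConcaveOn_log_fst_add_log_snd :
    StrictConcaveOn ℝ (Ioi 0 ×ˢ Ioi 0) fun p : ℝ × ℝ => log p.1 + log p.2 :=
  strictConcaveOn_log_Ioi.fst_add_snd strictConcaveOn_log_Ioi

section

variable {A B : ℝ}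

theorem hasDerivAt_log_mul_exp_neg_add (hA : 0 ≤ A) (hB : 0 < B) (s : ℝ) :
    HasDerivAt (fun s => log (A * exp (-s) + B)) (B / (A * exp (-s) + B) - 1) s := by
  have hpos : 0 < A * exp (-s) + B := by positivity
  convert (((hasDerivAt_neg s).exp.const_mul A).add_const B).log hpos.ne' using 1
  field_simp
  ring

theorem convexOn_log_mul_exp_neg_add (hA : 0 ≤ A) (hB : 0 < B) :
    ConvexOn ℝ univ fun s => log (A * exp (-s) + B) := by
  have hderiv : deriv (fun s => log (A * exp (-s) + B)) = fun s => B / (A * exp (-s) + B) - 1 :=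
    funext fun s => (hasDerivAt_log_mul_exp_neg_add hA hB s).deriv
  refine Monotone.convexOn_univ_of_deriv
    (fun s => (hasDerivAt_log_mul_exp_neg_add hA hB s).differentiableAt) ?_
  rw [hderiv]
  intro s t hst
  dsimp only
  gcongr

theorem strictAnti_log_mul_exp_neg_add (hA : 0 < A) (hB : 0 ≤ B) :
    StrictAnti fun s => log (A * exp (-s) + B) := by
  intro s t hst
  apply log_lt_log (by positivity)
  gcongr

end

/-- Proposition 3 (core claim): f(x,y) = log(A/(x·y) + B) is strictly convex
on the open positive quadrant. -/
theorem strictConvexOn_log_inv_prod (A B : ℝ) (hA : 0 < A) (hB : 0 < B) :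
    StrictConvexOn ℝ {p : ℝ × ℝ | 0 < p.1 ∧ 0 < p.2}
      (fun p : ℝ × ℝ => Real.log (A / (p.1 * p.2) + B)) := by
  have himage : (fun p : ℝ × ℝ => log p.1 + log p.2) '' (Ioi 0 ×ˢ Ioi 0) = univ :=
    eq_univ_of_forall fun s => ⟨(exp s, 1), ⟨exp_pos s, mem_Ioi.mpr one_pos⟩, by simp⟩
  have hcomp : StrictConvexOn ℝ (Ioi 0 ×ˢ Ioi 0)
      ((fun s => log (A * exp (-s) + B)) ∘ fun p : ℝ × ℝ => log p.1 + log p.2) := by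
    refine ConvexOn.comp_strictConcaveOn ?_ strictConcaveOn_log_fst_add_log_snd ?_
    · rw [himage]
      exact convexOn_log_mul_exp_neg_add hA.le hB
    · exact (strictAnti_log_mul_exp_neg_add hA hB.le).strictAntiOn _
  refine hcomp.congr fun p ⟨hx, hy⟩ => ?_
  simp only [Function.comp_apply, exp_neg, exp_add, exp_log hx, exp_log hy, div_eq_mul_inv]
end

section
/- Let A > 0 and let x₀ > 0, y₀ > 0 be fixed, and set γ₀ = A/(x₀·y₀). Then for all x > 0 and y > 0, log₂(1 + A/(x·y)) ≥ log₂(1 + γ₀) − (γ₀ / (ln 2 · (1 + γ₀))) · (x/x₀ + y/y₀ − 2). -/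
/-! With `u = x / x₀`, `v = y / y₀` the rate is `log₂ (1 + γ₀ (u v)⁻¹)`. Concavity of `log` gives
`log (1 + γ₀ z) ≥ log (1 + γ₀) + γ₀ / (1 + γ₀) · log z`, and `log (u v)⁻¹ ≥ 2 - u - v` because
`log t ≤ t - 1`. -/

open Real

/- `(1 + γ z) / (1 + γ) = (1 - c) • 1 + c • z` with `c = γ / (1 + γ)`. -/
theorem Real.log_one_add_add_mul_log_le_log_one_add_mul {γ z : ℝ} (hγ : 0 ≤ γ) (hz : 0 < z) :
    log (1 + γ) + γ / (1 + γ) * log z ≤ log (1 + γ * z) := by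
  have hγ₁ : 0 < 1 + γ := by linarith
  have hconc := strictConcaveOn_log_Ioi.concaveOn.2 (Set.mem_Ioi.2 one_pos) (Set.mem_Ioi.2 hz)
    (by positivity : 0 ≤ 1 / (1 + γ)) (by positivity : 0 ≤ γ / (1 + γ))
    (by field_simp)
  have hcomb : 1 / (1 + γ) * 1 + γ / (1 + γ) * z = (1 + γ * z) / (1 + γ) := by
    field_simp
  simp only [smul_eq_mul, log_one, mul_zero, zero_add] at hconc
  rw [hcomb, log_div (by positivity) hγ₁.ne'] at hconc
  linarith

theorem Real.log_one_add_sub_mul_le_log_one_add_mul_inv {γ u v : ℝ} (hγ : 0 ≤ γ)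
    (hu : 0 < u) (hv : 0 < v) :
    log (1 + γ) - γ / (1 + γ) * (u + v - 2) ≤ log (1 + γ * (u * v)⁻¹) := by
  have hlog : -(u + v - 2) ≤ log (u * v)⁻¹ := by
    rw [log_inv, log_mul hu.ne' hv.ne']
    linarith [log_le_sub_one_of_pos hu, log_le_sub_one_of_pos hv]
  have hc : 0 ≤ γ / (1 + γ) := by positivity
  calc log (1 + γ) - γ / (1 + γ) * (u + v - 2)
      ≤ log (1 + γ) + γ / (1 + γ) * log (u * v)⁻¹ := by
        linarith [mul_le_mul_of_nonneg_left hlog hc]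
    _ ≤ log (1 + γ * (u * v)⁻¹) := log_one_add_add_mul_log_le_log_one_add_mul hγ (by positivity)

/-- Tangent-plane lower bound G for the sensing rate (Proposition 3). -/
theorem sensing_rate_tangent_lower_bound (A x₀ y₀ : ℝ) (hA : 0 < A)
    (hx₀ : 0 < x₀) (hy₀ : 0 < y₀) (γ₀ : ℝ) (hγ₀ : γ₀ = A / (x₀ * y₀)) :
    ∀ x y : ℝ, 0 < x → 0 < y →
      Real.logb 2 (1 + γ₀) - (γ₀ / (Real.log 2 * (1 + γ₀))) * (x / x₀ + y / y₀ - 2)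
        ≤ Real.logb 2 (1 + A / (x * y)) := by
  intro x y hx hy
  have hγ : 0 ≤ γ₀ := by rw [hγ₀]; positivity
  have hAxy : A / (x * y) = γ₀ * (x / x₀ * (y / y₀))⁻¹ := by
    rw [hγ₀]
    field_simp
  have hlhs : Real.logb 2 (1 + γ₀) - γ₀ / (Real.log 2 * (1 + γ₀)) * (x / x₀ + y / y₀ - 2)
      = (Real.log (1 + γ₀) - γ₀ / (1 + γ₀) * (x / x₀ + y / y₀ - 2)) / Real.log 2 := by
    rw [Real.logb]
    field_simp
  rw [hlhs, hAxy, Real.logb]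
  exact div_le_div_of_nonneg_right
    (log_one_add_sub_mul_le_log_one_add_mul_inv hγ (by positivity) (by positivity))
    (Real.log_pos one_lt_two).le
end
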